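/- arXiv:2503.13341 — 2 statements merged into one kernel-verified Lean document; each statement's English description precedes it below -/
import Mathlib

section
/- Let k be a field of characteristic zero, I a nonzero ideal of R = k[x_1,…,x_n], and a a natural number. Then the set {p ∈ k^n : ord_p(I) ≥ a+1} equals the set of common zeros in k^n of all elements of D^a(I); in particular the locus of points of order greater than a is Zariski closed, so that the function p ↦ ord_p(I) is upper semicontinuous. -/
/-!
Translating by `p` carries `m_p` to the ideal generated by the variables, so `ord_p f ≥ m` says
exactly that `f ∈ m_p ^ m`. Differentiation maps `m_p ^ (m + 1)` into `m_p ^ m`; conversely, in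
characteristic zero, a polynomial vanishing at `p` all of whose partials lie in `m_p ^ m` lies in
`m_p ^ (m + 1)`, because `∂ᵢ` multiplies the coefficient of `x ^ (d + eᵢ)` by `dᵢ + 1 ≠ 0`.
Hence `D(I) ⊆ m_p ^ m ↔ I ⊆ m_p ^ (m + 1)` for `m ≥ 1`, and by induction
`Dᵃ(I) ⊆ m_p ↔ I ⊆ m_p ^ (a + 1)`.
-/

open MvPolynomial

/-- The derivative ideal: the ideal generated by `I` together with all first partial
derivatives of its elements. -/
noncomputable def derivIdeal {k : Type*} [CommSemiring k] {σ : Type*}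
    (I : Ideal (MvPolynomial σ k)) : Ideal (MvPolynomial σ k) :=
  I ⊔ Ideal.span {g | ∃ f ∈ I, ∃ i : σ, g = pderiv i f}

/-- The order of a nonzero polynomial at a point `p`: the smallest total degree of a monomial
appearing in the shifted polynomial `f(x+p)`. -/
noncomputable def polyOrdAt {k : Type*} [CommSemiring k] {σ : Type*} (p : σ → k)
    (f : MvPolynomial σ k) : ℕ :=
  sInf {m | ∃ d ∈ (aeval (fun i => X i + C (p i)) f : MvPolynomial σ k).support,
    (d.sum fun _ e => e) = m}

/-- The order of a nonzero ideal at a point: `min {ord_p f : 0 ≠ f ∈ I}`. -/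
noncomputable def idealOrdAt {k : Type*} [CommSemiring k] {σ : Type*} (p : σ → k)
    (I : Ideal (MvPolynomial σ k)) : ℕ :=
  sInf {m | ∃ f ∈ I, f ≠ 0 ∧ polyOrdAt p f = m}

namespace MvPolynomial

open Finsupp

section idealOfVars

variable {R σ : Type*} [CommSemiring R] {f : MvPolynomial σ R} {m : ℕ}

theorem mem_idealOfVars_iff_constantCoeff_eq_zero :
    f ∈ idealOfVars σ R ↔ constantCoeff f = 0 := by
  rw [← pow_one (idealOfVars σ R), mem_pow_idealOfVars_iff', constantCoeff_eq]
  exact ⟨fun h => h 0 (by simp), fun h x hx => by rwa [(degree_eq_zero_iff x).mp (by omega)]⟩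

theorem pderiv_mem_pow_idealOfVars (hf : f ∈ idealOfVars σ R ^ (m + 1)) (i : σ) :
    pderiv i f ∈ idealOfVars σ R ^ m := by
  rw [mem_pow_idealOfVars_iff'] at hf ⊢
  intro x hx
  rw [coeff_pderiv, hf _ (by simpa using hx), zero_mul]

theorem mem_pow_idealOfVars_succ_iff [NoZeroDivisors R] [CharZero R] :
    f ∈ idealOfVars σ R ^ (m + 1) ↔
      constantCoeff f = 0 ∧ ∀ i, pderiv i f ∈ idealOfVars σ R ^ m := by
  refine ⟨fun hf => ⟨?_, pderiv_mem_pow_idealOfVars hf⟩, fun ⟨h0, hd⟩ => ?_⟩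
  · exact mem_idealOfVars_iff_constantCoeff_eq_zero.mp
      (Ideal.pow_le_self m.succ_ne_zero hf)
  rw [mem_pow_idealOfVars_iff']
  intro x hx
  obtain rfl | ⟨i, hi⟩ := eq_or_ne x 0 |>.imp_right DFunLike.ne_iff.mp
  · rwa [constantCoeff_eq] at h0
  obtain ⟨y, rfl⟩ := le_iff_exists_add'.mp (single_le_iff.mpr (Nat.one_le_iff_ne_zero.mpr hi))
  have hy := (mem_pow_idealOfVars_iff' _ _).mp (hd i) y (by simpa using hx)
  rw [coeff_pderiv] at hy
  exact (mul_eq_zero.mp hy).resolve_right (Nat.cast_add_one_ne_zero (y i))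

end idealOfVars

section shift

variable {R σ : Type*} [CommRing R] (p : σ → R)

noncomputable def shift : MvPolynomial σ R ≃ₐ[R] MvPolynomial σ R :=
  AlgEquiv.ofAlgHom (aeval fun i => X i + C (p i)) (aeval fun i => X i - C (p i))
    (by ext; simp) (by ext; simp)

@[simp]
theorem shift_X (i : σ) : shift p (X i) = X i + C (p i) := aeval_X _ i

@[simp]
theorem shift_C (a : R) : shift p (C a) = C a := aeval_C _ a

theorem constantCoeff_shift (f : MvPolynomial σ R) : constantCoeff (shift p f) = eval p f := by
  induction f using MvPolynomial.induction_on with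
  | C a => simp
  | add f g hf hg => simp only [map_add, hf, hg]
  | mul_X f i hf => simp [hf]

theorem pderiv_shift (i : σ) (f : MvPolynomial σ R) :
    pderiv i (shift p f) = shift p (pderiv i f) := by
  classical
  induction f using MvPolynomial.induction_on with
  | C a => simp
  | add f g hf hg => simp only [map_add, hf, hg]
  | mul_X f j hf => simp [hf, Pi.single_apply, apply_ite (shift p)]

theorem comap_shift_idealOfVars : (idealOfVars σ R).comap (shift p) = RingHom.ker (eval p) := by
  ext f
  rw [Ideal.mem_comap, mem_idealOfVars_iff_constantCoeff_eq_zero, RingHom.mem_ker,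
    constantCoeff_shift]

theorem comap_shift_pow_idealOfVars (m : ℕ) :
    (idealOfVars σ R ^ m).comap (shift p) = RingHom.ker (eval p) ^ m := by
  have h := Ideal.map_symm (I := idealOfVars σ R ^ m) (shift p).toRingEquiv
  rw [Ideal.map_pow, Ideal.map_symm] at h
  rw [← comap_shift_idealOfVars]
  exact h.symm

end shift

section CharZero

variable {R σ : Type*} [CommRing R] [NoZeroDivisors R] [CharZero R] {p : σ → R}
  {f : MvPolynomial σ R} {m : ℕ}

theorem mem_pow_ker_eval_succ_iff :
    f ∈ RingHom.ker (eval p) ^ (m + 1) ↔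
      eval p f = 0 ∧ ∀ i, pderiv i f ∈ RingHom.ker (eval p) ^ m := by
  simp only [← comap_shift_pow_idealOfVars, Ideal.mem_comap, mem_pow_idealOfVars_succ_iff,
    constantCoeff_shift, pderiv_shift]

end CharZero

end MvPolynomial

section order

variable {R σ : Type*} [CommRing R] {p : σ → R} {m : ℕ}

theorem le_polyOrdAt_iff {f : MvPolynomial σ R} (hf : f ≠ 0) :
    m ≤ polyOrdAt p f ↔ f ∈ RingHom.ker (eval p) ^ m := by
  obtain ⟨d, hd⟩ : (shift p f).support.Nonempty :=
    support_nonempty.mpr ((map_ne_zero_iff _ (shift p).injective).mpr hf)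
  rw [polyOrdAt, le_csInf_iff'', ← comap_shift_pow_idealOfVars,
    Ideal.mem_comap, mem_pow_idealOfVars_iff]
  simp only [Set.mem_ofPred_eq, forall_exists_index, and_imp, forall_apply_eq_imp_iff₂]
  exacts [Iff.rfl, ⟨_, d, hd, rfl⟩]

theorem le_idealOrdAt_iff {I : Ideal (MvPolynomial σ R)} (hI : I ≠ ⊥) :
    m ≤ idealOrdAt p I ↔ I ≤ RingHom.ker (eval p) ^ m := by
  obtain ⟨f₀, hf₀I, hf₀⟩ := Submodule.ne_bot_iff I |>.mp hI
  rw [idealOrdAt, le_csInf_iff'']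
  simp only [Set.mem_ofPred_eq, forall_exists_index, and_imp]
  refine ⟨fun h f hf => ?_, fun h _ f hf hf0 hord => hord ▸ (le_polyOrdAt_iff hf0).mpr (h hf)⟩
  obtain rfl | hf0 := eq_or_ne f 0
  · exact zero_mem _
  · exact (le_polyOrdAt_iff hf0).mp (h _ f hf hf0 rfl)
  exact ⟨_, f₀, hf₀I, hf₀, rfl⟩

end order

section derivIdeal

variable {R σ : Type*}

theorem derivIdeal_le_iff [CommSemiring R] {I J : Ideal (MvPolynomial σ R)} :
    derivIdeal I ≤ J ↔ I ≤ J ∧ ∀ f ∈ I, ∀ i, pderiv i f ∈ J := by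
  rw [derivIdeal, sup_le_iff, Ideal.span_le]
  refine and_congr_right fun _ => ⟨fun h f hf i => h ⟨f, hf, i, rfl⟩, ?_⟩
  rintro h _ ⟨f, hf, i, rfl⟩
  exact h f hf i

variable [CommRing R] [NoZeroDivisors R] [CharZero R] {p : σ → R} {I : Ideal (MvPolynomial σ R)}

theorem derivIdeal_le_pow_ker_eval_iff {m : ℕ} (hm : m ≠ 0) :
    derivIdeal I ≤ RingHom.ker (eval p) ^ m ↔ I ≤ RingHom.ker (eval p) ^ (m + 1) := by
  rw [derivIdeal_le_iff]
  refine ⟨fun ⟨hI, hD⟩ f hf => ?_, fun h => ⟨?_, fun f hf => ?_⟩⟩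
  · exact mem_pow_ker_eval_succ_iff.mpr ⟨Ideal.pow_le_self hm (hI hf), hD f hf⟩
  · exact h.trans (Ideal.pow_le_pow_right m.le_succ)
  · exact (mem_pow_ker_eval_succ_iff.mp (h hf)).2

theorem iterate_derivIdeal_le_ker_eval_iff (a : ℕ) :
    derivIdeal^[a] I ≤ RingHom.ker (eval p) ↔ I ≤ RingHom.ker (eval p) ^ (a + 1) := by
  induction a generalizing I with
  | zero => rw [Function.iterate_zero_apply, zero_add, pow_one]
  | succ a ih =>
    rw [Function.iterate_succ_apply, ih, derivIdeal_le_pow_ker_eval_iff a.succ_ne_zero]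

end derivIdeal

/-- For a nonzero ideal `I` over a field of characteristic zero and a natural number `a`,
the locus of points of order `≥ a+1` (i.e. order `> a`) is exactly the common zero locus of
the derivative ideal `Dᵃ(I)`; in particular it is Zariski closed, so the order function is
upper semicontinuous. -/
theorem order_locus_eq_zeroLocus_derivIdeal {k : Type*} [Field k] [CharZero k] {n : ℕ}
    (I : Ideal (MvPolynomial (Fin n) k)) (hI : I ≠ ⊥) (a : ℕ) :
    {p : Fin n → k | a + 1 ≤ idealOrdAt p I} =
      {p : Fin n → k | ∀ f ∈ derivIdeal^[a] I, eval p f = 0} := by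
  ext p
  rw [Set.mem_ofPred_eq, Set.mem_ofPred_eq, le_idealOrdAt_iff hI,
    ← iterate_derivIdeal_le_ker_eval_iff]
  rfl
end

section
/- (Functoriality of coefficient ideals under smooth extension by variables.) Let k be a field of characteristic zero, R = k[x_1,…,x_n], S = k[x_1,…,x_n, y_1,…,y_m], I ⊆ R an ideal, and a ≥ 1 an integer. Then the coefficient ideal computed in S of the extended ideal equals the extension of the coefficient ideal: C(I·S, a) = C(I, a)·S. -/
open MvPolynomial

/-- The coefficient ideal `C(I,a) = Σ D^{a-1}(I)^{b₁} ⋯ D⁰(I)^{b_a}`, the sum running over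
all tuples `(b₁,…,b_a)` of nonnegative integers with `Σ i·b_i ≥ a!`. -/
noncomputable def coeffIdeal {k : Type*} [CommSemiring k] {σ : Type*}
    (I : Ideal (MvPolynomial σ k)) (a : ℕ) : Ideal (MvPolynomial σ k) :=
  ⨆ b : {b : Fin a → ℕ // Nat.factorial a ≤ ∑ i, (i.1 + 1) * b i},
    ∏ i : Fin a, (derivIdeal^[a - (i.1 + 1)] I) ^ (b.1 i)

/-! For any injective renaming of variables, a partial derivative in a new variable kills every
renamed polynomial and one in an old variable is the renamed derivative; with the Leibniz rule
this gives `D(I·S) = D(I)·S`. Extension of ideals is a semiring homomorphism on ideals that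
preserves suprema, so it then commutes with the whole formula defining `C(I, a)`. -/

section

variable {k σ τ : Type*} [CommSemiring k]

lemma le_derivIdeal (I : Ideal (MvPolynomial σ k)) : I ≤ derivIdeal I := le_sup_left

lemma pderiv_mem_derivIdeal {I : Ideal (MvPolynomial σ k)} {p : MvPolynomial σ k} (hp : p ∈ I)
    (i : σ) : pderiv i p ∈ derivIdeal I :=
  Submodule.mem_sup_right (Ideal.subset_span ⟨p, hp, i, rfl⟩)

lemma pderiv_rename_of_notMem_range {f : σ → τ} {j : τ} (hj : j ∉ Set.range f)
    (p : MvPolynomial σ k) : pderiv j (rename f p) = 0 :=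
  pderiv_eq_zero_of_notMem_vars fun hmem ↦
    let ⟨i, _, hi⟩ := mem_vars_rename f p hmem
    hj ⟨i, hi⟩

variable {f : σ → τ} (hf : Function.Injective f)
include hf

lemma pderiv_rename_mem_map_derivIdeal {I : Ideal (MvPolynomial σ k)} {p : MvPolynomial σ k}
    (hp : p ∈ I) (j : τ) : pderiv j (rename f p) ∈ Ideal.map (rename f) (derivIdeal I) := by
  by_cases hj : j ∈ Set.range f
  · obtain ⟨i, rfl⟩ := hj
    rw [pderiv_rename hf]
    exact Ideal.mem_map_of_mem _ (pderiv_mem_derivIdeal hp i)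
  · rw [pderiv_rename_of_notMem_range hj]
    exact zero_mem _

lemma pderiv_mem_map_derivIdeal {I : Ideal (MvPolynomial σ k)} {p : MvPolynomial τ k}
    (hp : p ∈ Ideal.map (rename f) I) (j : τ) :
    pderiv j p ∈ Ideal.map (rename f) (derivIdeal I) := by
  have hle : Ideal.map (rename f) I ≤ Ideal.map (rename f) (derivIdeal I) :=
    Ideal.map_mono (le_derivIdeal I)
  induction hp using Submodule.span_induction with
  | mem x hx =>
    obtain ⟨q, hq, rfl⟩ := hx
    exact pderiv_rename_mem_map_derivIdeal hf hq j
  | zero => simp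
  | add x y _ _ hx hy => simpa only [map_add] using add_mem hx hy
  | smul c x hx hx' =>
    rw [smul_eq_mul, pderiv_mul]
    exact add_mem (Ideal.mul_mem_left _ _ (hle hx)) (Ideal.mul_mem_left _ _ hx')

lemma derivIdeal_map_rename (I : Ideal (MvPolynomial σ k)) :
    derivIdeal (Ideal.map (rename f) I) = Ideal.map (rename f) (derivIdeal I) := by
  apply le_antisymm
  · refine sup_le (Ideal.map_mono (le_derivIdeal I)) (Ideal.span_le.mpr ?_)
    rintro _ ⟨p, hp, j, rfl⟩
    exact pderiv_mem_map_derivIdeal hf hp j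
  · rw [derivIdeal, Ideal.map_sup, Ideal.map_span]
    refine sup_le_sup_left (Ideal.span_mono ?_) _
    rintro _ ⟨_, ⟨p, hp, i, rfl⟩, rfl⟩
    exact ⟨rename f p, Ideal.mem_map_of_mem _ hp, f i, (pderiv_rename hf i p).symm⟩

lemma derivIdeal_iterate_map_rename (I : Ideal (MvPolynomial σ k)) (t : ℕ) :
    derivIdeal^[t] (Ideal.map (rename f) I) = Ideal.map (rename f) (derivIdeal^[t] I) := by
  induction t with
  | zero => rfl
  | succ t ih =>
    rw [Function.iterate_succ_apply', Function.iterate_succ_apply', ih,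
      derivIdeal_map_rename hf]

lemma coeffIdeal_map_rename_of_injective (I : Ideal (MvPolynomial σ k)) (a : ℕ) :
    coeffIdeal (Ideal.map (rename f) I) a = Ideal.map (rename f) (coeffIdeal I a) := by
  rw [coeffIdeal, coeffIdeal, Ideal.map_iSup]
  refine iSup_congr fun b ↦ ?_
  rw [← Ideal.mapHom_apply _ (∏ _, _), map_prod]
  refine Finset.prod_congr rfl fun i _ ↦ ?_
  rw [map_pow, Ideal.mapHom_apply, derivIdeal_iterate_map_rename hf]

end

theorem coeffIdeal_map_rename_general {k : Type*} [Field k] {n m : ℕ}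
    (I : Ideal (MvPolynomial (Fin n) k)) (a : ℕ) :
    coeffIdeal (Ideal.map (rename (Sum.inl : Fin n → Fin n ⊕ Fin m) :
        MvPolynomial (Fin n) k →ₐ[k] MvPolynomial (Fin n ⊕ Fin m) k) I) a =
      Ideal.map (rename (Sum.inl : Fin n → Fin n ⊕ Fin m) :
        MvPolynomial (Fin n) k →ₐ[k] MvPolynomial (Fin n ⊕ Fin m) k) (coeffIdeal I a) :=
  coeffIdeal_map_rename_of_injective Sum.inl_injective I a

/-- Functoriality of coefficient ideals under the smooth extension
`R = k[x₁,…,xₙ] ↪ S = k[x₁,…,xₙ,y₁,…,y_m]`: `C(I·S, a) = C(I,a)·S`. -/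
theorem coeffIdeal_map_rename {k : Type*} [Field k] [CharZero k] {n m : ℕ}
    (I : Ideal (MvPolynomial (Fin n) k)) (a : ℕ) (ha : 1 ≤ a) :
    coeffIdeal (Ideal.map (rename (Sum.inl : Fin n → Fin n ⊕ Fin m) :
        MvPolynomial (Fin n) k →ₐ[k] MvPolynomial (Fin n ⊕ Fin m) k) I) a =
      Ideal.map (rename (Sum.inl : Fin n → Fin n ⊕ Fin m) :
        MvPolynomial (Fin n) k →ₐ[k] MvPolynomial (Fin n ⊕ Fin m) k) (coeffIdeal I a) :=
  coeffIdeal_map_rename_general I a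
end
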